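/- arXiv:2407.02225 — 2 statements merged into one kernel-verified Lean document; each statement's English description precedes it below -/
import Mathlib

section
/- Let W : ℝ → ℝ be continuous and nonnegative, let φ(u) := ∫_0^u √(2W(v)) dv, and fix ℓ > 0. Then for every X ∈ H^1((0,1)), the rescaled free energy F_ℓ(X) := ∫_0^1 [ (1/(2ℓ)) (Ẋ_s)^2 + ℓ W(X_s) ] ds satisfies F_ℓ(X) ≥ |φ(X(1)) - φ(X(0))|. -/
open MeasureTheory intervalIntegral

/-- Modica–Mortola type lower bound: for `W` continuous and nonnegative,
`φ u = ∫_0^u √(2W)`, and `X ∈ H¹((0,1))`, the rescaled free energy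
`F_ℓ(X) = ∫_0^1 [ (1/(2ℓ)) Ẋ² + ℓ W(X) ]` is at least `|φ(X 1) - φ(X 0)|`. -/
theorem free_energy_ge_surface_increment
    (W : ℝ → ℝ) (hW : Continuous W) (hW0 : ∀ v, 0 ≤ W v)
    (ℓ : ℝ) (hℓ : 0 < ℓ)
    (X X' : ℝ → ℝ)
    (hX : ∀ s ∈ Set.Icc (0:ℝ) 1, HasDerivAt X (X' s) s)
    (hX'2 : IntervalIntegrable (fun s => X' s ^ 2) volume 0 1) :
    |(∫ v in (0:ℝ)..(X 1), Real.sqrt (2 * W v))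
        - ∫ v in (0:ℝ)..(X 0), Real.sqrt (2 * W v)|
      ≤ ∫ s in (0:ℝ)..1, ((1/(2*ℓ)) * X' s ^ 2 + ℓ * W (X s)) := by
  set g : ℝ → ℝ := fun v => Real.sqrt (2 * W v) with hg_def
  have hg : Continuous g := (continuous_const.mul hW).sqrt
  have hg0 : ∀ v, 0 ≤ g v := fun v => Real.sqrt_nonneg _
  set φ : ℝ → ℝ := fun u => ∫ v in (0:ℝ)..u, g v with hφ_def
  have hφ : ∀ u, HasDerivAt φ (g u) u := by
    intro u
    exact intervalIntegral.integral_hasDerivAt_right (hg.intervalIntegrable 0 u)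
      hg.stronglyMeasurable.stronglyMeasurableAtFilter hg.continuousAt
  -- derivative of φ ∘ X on [0,1]
  have hcomp : ∀ s ∈ Set.uIcc (0:ℝ) 1,
      HasDerivAt (fun t => φ (X t)) (g (X s) * X' s) s := by
    intro s hs
    rw [Set.uIcc_of_le (zero_le_one)] at hs
    exact (hφ (X s)).comp s (hX s hs)
  -- continuity of X on [0,1]
  have hXc : ContinuousOn X (Set.Icc (0:ℝ) 1) :=
    fun s hs => (hX s hs).continuousAt.continuousWithinAt
  have hgXc : ContinuousOn (fun s => g (X s)) (Set.Icc (0:ℝ) 1) :=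
    hg.comp_continuousOn hXc
  -- a.e. measurability of X' on (0,1]
  have hX'ae : X' =ᵐ[volume.restrict (Set.uIoc (0:ℝ) 1)] deriv X := by
    apply Filter.eventuallyEq_of_mem (self_mem_ae_restrict measurableSet_uIoc)
    intro s hs
    rw [Set.uIoc_of_le (zero_le_one)] at hs
    exact ((hX s ⟨le_of_lt hs.1, hs.2⟩).deriv).symm
  have hX'm : AEStronglyMeasurable X' (volume.restrict (Set.uIoc (0:ℝ) 1)) :=
    ((measurable_deriv X).aestronglyMeasurable.restrict).congr hX'ae.symm
  have hgXm : AEStronglyMeasurable (fun s => g (X s))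
      (volume.restrict (Set.uIoc (0:ℝ) 1)) := by
    rw [Set.uIoc_of_le (zero_le_one)]
    exact (hgXc.mono Set.Ioc_subset_Icc_self).aestronglyMeasurable measurableSet_Ioc
  -- the dominating integrand
  have hRHSint : IntervalIntegrable
      (fun s => (1/(2*ℓ)) * X' s ^ 2 + ℓ * W (X s)) volume 0 1 := by
    apply (hX'2.const_mul _).add
    apply ContinuousOn.intervalIntegrable
    rw [Set.uIcc_of_le (zero_le_one)]
    exact continuousOn_const.mul (hW.comp_continuousOn hXc)
  -- pointwise AM-GM bound
  have hbound : ∀ s, |g (X s) * X' s| ≤ (1/(2*ℓ)) * X' s ^ 2 + ℓ * W (X s) := by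
    intro s
    have h1 : g (X s) ^ 2 = 2 * W (X s) :=
      Real.sq_sqrt (mul_nonneg two_pos.le (hW0 _))
    have h2 : 0 ≤ g (X s) := hg0 _
    have h3 : |g (X s) * X' s| = g (X s) * |X' s| := by
      rw [abs_mul, abs_of_nonneg h2]
    rw [h3]
    have h4 : (|X' s|) ^ 2 = X' s ^ 2 := sq_abs _
    have hne : (2*ℓ) ≠ 0 := by positivity
    have key : (1/(2*ℓ)) * (|X' s| - ℓ * g (X s))^2 =
        (1/(2*ℓ)) * X' s ^2 - g (X s) * |X' s| + (ℓ/2) * g (X s)^2 := by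
      rw [sub_sq, sq_abs]
      field_simp
    have hx : 0 ≤ (1/(2*ℓ)) * (|X' s| - ℓ * g (X s))^2 := by positivity
    have h7 : (ℓ/2) * g (X s)^2 = ℓ * W (X s) := by rw [h1]; ring
    linarith [key, hx, h7, h4]
  -- integrability of the product
  have hprod : IntervalIntegrable (fun s => g (X s) * X' s) volume 0 1 := by
    apply hRHSint.mono_fun (hgXm.mul hX'm)
    filter_upwards with s
    rw [Real.norm_eq_abs, Real.norm_eq_abs]
    calc |g (X s) * X' s| ≤ (1/(2*ℓ)) * X' s ^ 2 + ℓ * W (X s) := hbound s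
      _ ≤ |(1/(2*ℓ)) * X' s ^ 2 + ℓ * W (X s)| := le_abs_self _
  -- FTC
  have hFTC : ∫ s in (0:ℝ)..1, g (X s) * X' s = φ (X 1) - φ (X 0) :=
    intervalIntegral.integral_eq_sub_of_hasDerivAt hcomp hprod
  rw [← hFTC]
  calc |∫ s in (0:ℝ)..1, g (X s) * X' s|
      ≤ ∫ s in (0:ℝ)..1, |g (X s) * X' s| :=
        intervalIntegral.abs_integral_le_integral_abs zero_le_one
    _ ≤ ∫ s in (0:ℝ)..1, ((1/(2*ℓ)) * X' s ^ 2 + ℓ * W (X s)) := by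
        apply intervalIntegral.integral_mono_on zero_le_one hprod.abs hRHSint
        intro s _
        exact hbound s
end

section
/- Fix p ∈ [1, ∞), n ≥ 1, δ > 0, and jump times 0 = s_0 < s_1 < ... < s_n < 1 with s_k - s_{k-1} ≥ δ for k = 1,...,n and s_n ≤ 1 - δ. Let m be the {-1,+1}-valued step function on (0,1) that jumps exactly at s_1,...,s_n (alternating values on consecutive intervals [s_{k-1}, s_k)). Then for every {-1,+1}-valued step function m' on (0,1) with at most n-1 jumps, ‖m - m'‖_{L^p((0,1))}^p ≥ 2^p δ / 2; equivalently, dist_{L^p}(m, M_{n-1}) ≥ 2 (δ/2)^{1/p}, where M_{n-1} denotes the set of {-1,1}-valued BV profiles with at most n-1 jumps. -/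
open MeasureTheory intervalIntegral

/-- An `n`-interface profile with well-separated jumps is at `Lᵖ` distance at least
`(2ᵖ δ/2)^{1/p}` from any `{-1,1}`-valued profile with at most `n-1` jumps. -/
theorem lp_distance_from_fewer_interfaces
    (p : ℝ) (hp : 1 ≤ p) (n : ℕ) (hn : 1 ≤ n) (δ : ℝ) (hδ : 0 < δ)
    (s : ℕ → ℝ) (hs0 : s 0 = 0)
    (hgap : ∀ k, 1 ≤ k → k ≤ n → δ ≤ s k - s (k - 1))
    (hsn : s n ≤ 1 - δ)
    (ε : ℝ) (hε : ε = 1 ∨ ε = -1)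
    (m : ℝ → ℝ)
    (hm : ∀ t, m t = ε * (-1) ^ (((Finset.Icc 1 n).filter (fun k => s k ≤ t)).card))
    (m' : ℝ → ℝ) (hm'val : ∀ t ∈ Set.Ioo (0:ℝ) 1, m' t = 1 ∨ m' t = -1)
    (J : Finset ℝ) (hJ : J.card ≤ n - 1)
    (hm'const : ∀ t ∈ Set.Ioo (0:ℝ) 1, ∀ t' ∈ Set.Ioo (0:ℝ) 1, t ≤ t' →
        (∀ u ∈ Set.Icc t t', u ∉ (J : Set ℝ)) → m' t = m' t') :
    2 ^ p * δ / 2 ≤ ∫ t in (0:ℝ)..1, |m t - m' t| ^ p := by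
  classical
  have hp0 : 0 ≤ p := le_trans zero_le_one hp
  -- monotonicity of s
  have hmono : ∀ j, j ≤ n → ∀ i, i ≤ j → s i ≤ s j := by
    intro j
    induction j with
    | zero => intro _ i hi; have : i = 0 := by omega
              rw [this]
    | succ j ih =>
      intro hj i hi
      have hg : δ ≤ s (j+1) - s j := by
        have := hgap (j+1) (by omega) hj
        simpa using this
      rcases eq_or_lt_of_le hi with h | h
      · rw [h]
      · have : s i ≤ s j := ih (by omega) i (by omega)
        linarith
  have hsep : ∀ i j, j ≤ n → i < j → s i + δ ≤ s j := by
    intro i j hj hij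
    have h1 : s i ≤ s (j-1) := hmono (j-1) (by omega) i (by omega)
    have h2 : δ ≤ s j - s (j-1) := hgap j (by omega) hj
    linarith
  have hpos : ∀ k, 1 ≤ k → k ≤ n → δ ≤ s k := by
    intro k h1 h2
    have := hsep 0 k h2 (by omega)
    linarith [this]
  have hub : ∀ k, k ≤ n → s k ≤ 1 - δ := by
    intro k h2
    have := hmono n le_rfl k h2
    linarith
  -- pigeonhole: some interval I_k avoids J
  obtain ⟨k, hk1, hkn, hkJ⟩ :
      ∃ k, 1 ≤ k ∧ k ≤ n ∧ ∀ x ∈ J, x ∉ Set.Ioo (s k - δ/2) (s k + δ/2) := by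
    by_contra hcon
    push_neg at hcon
    set f : ℕ → ℝ := fun k =>
      if hk : ∃ x ∈ J, x ∈ Set.Ioo (s k - δ/2) (s k + δ/2) then hk.choose else 0 with hf
    have hfspec : ∀ k, 1 ≤ k → k ≤ n →
        f k ∈ J ∧ f k ∈ Set.Ioo (s k - δ/2) (s k + δ/2) := by
      intro k h1 h2
      obtain ⟨x, hxJ, hxI⟩ := hcon k h1 h2
      have hex : ∃ x ∈ J, x ∈ Set.Ioo (s k - δ/2) (s k + δ/2) := ⟨x, hxJ, hxI⟩
      simp only [hf, dif_pos hex]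
      exact ⟨hex.choose_spec.1, hex.choose_spec.2⟩
    have hmaps : ∀ k ∈ Finset.Icc 1 n, f k ∈ J := by
      intro k hk
      rw [Finset.mem_Icc] at hk
      exact (hfspec k hk.1 hk.2).1
    have hcard : J.card < (Finset.Icc 1 n).card := by
      rw [Nat.card_Icc]; omega
    obtain ⟨a, ha, b, hb, hab, hfab⟩ :=
      Finset.exists_ne_map_eq_of_card_lt_of_maps_to hcard hmaps
    rw [Finset.mem_Icc] at ha hb
    have key : ∀ a b : ℕ, 1 ≤ a → a ≤ n → 1 ≤ b → b ≤ n → a < b → f a ≠ f b := by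
      intro a b ha1 ha2 hb1 hb2 hlt heq
      have hIa := (hfspec a ha1 ha2).2
      have hIb := (hfspec b hb1 hb2).2
      have := hsep a b hb2 hlt
      rw [Set.mem_Ioo] at hIa hIb
      rw [heq] at hIa
      linarith [hIa.2, hIb.1]
    rcases Nat.lt_or_ge a b with h | h
    · exact key a b ha.1 ha.2 hb.1 hb.2 h hfab
    · have h' : b < a := by omega
      exact key b a hb.1 hb.2 ha.1 ha.2 h' hfab.symm
  -- the interval I_k sits inside (0,1)
  have hskδ : δ ≤ s k := hpos k hk1 hkn
  have hskub : s k ≤ 1 - δ := hub k hkn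
  have hIsub : Set.Ioo (s k - δ/2) (s k + δ/2) ⊆ Set.Ioo (0:ℝ) 1 := by
    intro t ht
    rw [Set.mem_Ioo] at ht ⊢
    constructor <;> [linarith [ht.1]; linarith [ht.2]]
  -- value of m on the two halves
  have hcard_left : ∀ t : ℝ, s k - δ/2 < t → t < s k →
      ((Finset.Icc 1 n).filter (fun j => s j ≤ t)).card = k - 1 := by
    intro t ht1 ht2
    have hset : (Finset.Icc 1 n).filter (fun j => s j ≤ t) = Finset.Icc 1 (k-1) := by
      ext j
      simp only [Finset.mem_filter, Finset.mem_Icc]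
      constructor
      · rintro ⟨⟨h1, h2⟩, h3⟩
        refine ⟨h1, ?_⟩
        by_contra hjk
        push_neg at hjk
        have : s k ≤ s j := hmono j h2 k (by omega)
        linarith
      · rintro ⟨h1, h2⟩
        have h3 : s j ≤ s (k-1) := hmono (k-1) (by omega) j h2
        have h4 := hgap k hk1 hkn
        exact ⟨⟨h1, by omega⟩, by linarith⟩
    rw [hset, Nat.card_Icc]; omega
  have hcard_right : ∀ t : ℝ, s k ≤ t → t < s k + δ/2 →
      ((Finset.Icc 1 n).filter (fun j => s j ≤ t)).card = k := by
    intro t ht1 ht2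
    have hset : (Finset.Icc 1 n).filter (fun j => s j ≤ t) = Finset.Icc 1 k := by
      ext j
      simp only [Finset.mem_filter, Finset.mem_Icc]
      constructor
      · rintro ⟨⟨h1, h2⟩, h3⟩
        refine ⟨h1, ?_⟩
        by_contra hjk
        push_neg at hjk
        have : s k + δ ≤ s j := hsep k j h2 hjk
        linarith
      · rintro ⟨h1, h2⟩
        have h3 : s j ≤ s k := hmono k hkn j h2
        exact ⟨⟨h1, by omega⟩, by linarith⟩
    rw [hset, Nat.card_Icc]; omega
  set v : ℝ := ε * (-1) ^ k with hv
  have hvsq : v = 1 ∨ v = -1 := by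
    rcases hε with h | h <;> rcases Nat.even_or_odd k with hk | hk
    · left; rw [hv, h, hk.neg_one_pow]; ring
    · right; rw [hv, h, hk.neg_one_pow]; ring
    · right; rw [hv, h, hk.neg_one_pow]; ring
    · left; rw [hv, h, hk.neg_one_pow]; ring
  have hm_left : ∀ t ∈ Set.Ioo (s k - δ/2) (s k), m t = -v := by
    intro t ht
    rw [Set.mem_Ioo] at ht
    rw [hm t, hcard_left t ht.1 ht.2, hv]
    have hkk : k - 1 + 1 = k := by omega
    have : (-1:ℝ) ^ k = (-1) ^ (k-1) * (-1) := by rw [← pow_succ, hkk]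
    rw [this]; ring
  have hm_right : ∀ t ∈ Set.Ico (s k) (s k + δ/2), m t = v := by
    intro t ht
    rw [Set.mem_Ico] at ht
    rw [hm t, hcard_right t ht.1 ht.2, hv]
  -- m' is constant = c on I_k
  set c : ℝ := m' (s k) with hc
  have hskI : s k ∈ Set.Ioo (s k - δ/2) (s k + δ/2) := by
    rw [Set.mem_Ioo]; constructor <;> linarith
  have hcval : c = 1 ∨ c = -1 := hm'val (s k) (hIsub hskI)
  have hm'c : ∀ t ∈ Set.Ioo (s k - δ/2) (s k + δ/2), m' t = c := by
    intro t ht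
    have ht01 := hIsub ht
    rw [Set.mem_Ioo] at ht
    rcases le_total t (s k) with h | h
    · exact hm'const t ht01 (s k) (hIsub hskI) h (by
        intro u hu huJ
        rw [Set.mem_Icc] at hu
        exact hkJ u huJ (by rw [Set.mem_Ioo]; constructor <;> linarith [hu.1, hu.2]))
    · exact (hm'const (s k) (hIsub hskI) t ht01 h (by
        intro u hu huJ
        rw [Set.mem_Icc] at hu
        exact hkJ u huJ (by rw [Set.mem_Ioo]; constructor <;> linarith [hu.1, hu.2]))).symm
  -- measurable substitute g for m'
  set U : Set ℝ := {t | t ∈ Set.Ioo (0:ℝ) 1 ∧ t ∉ (J : Set ℝ) ∧ m' t = 1} with hU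
  have hUopen : IsOpen U := by
    rw [Metric.isOpen_iff]
    intro t htU
    obtain ⟨ht01, htJ, htm⟩ := htU
    have hJopen : IsOpen ((J : Set ℝ)ᶜ) := (J.finite_toSet.isClosed).isOpen_compl
    obtain ⟨r1, hr1, hball1⟩ := Metric.isOpen_iff.mp hJopen t htJ
    obtain ⟨r2, hr2, hball2⟩ := Metric.isOpen_iff.mp isOpen_Ioo t ht01
    refine ⟨min r1 r2, lt_min hr1 hr2, ?_⟩
    intro t' ht'
    rw [Metric.mem_ball] at ht'
    have ht'J : t' ∉ (J : Set ℝ) := hball1 (by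
      rw [Metric.mem_ball]; exact lt_of_lt_of_le ht' (min_le_left _ _))
    have ht'01 : t' ∈ Set.Ioo (0:ℝ) 1 := hball2 (by
      rw [Metric.mem_ball]; exact lt_of_lt_of_le ht' (min_le_right _ _))
    refine ⟨ht'01, ht'J, ?_⟩
    have hsub : Set.Icc (min t t') (max t t') ⊆ Metric.ball t (min r1 r2) := by
      intro u hu
      rw [Set.mem_Icc] at hu
      rw [Metric.mem_ball, Real.dist_eq, abs_sub_lt_iff]
      rw [Real.dist_eq, abs_sub_lt_iff] at ht'
      rcases le_total t t' with h | h
      · simp only [min_eq_left h, max_eq_right h] at hu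
        constructor <;> [linarith [hu.1, ht'.2, lt_min hr1 hr2]; linarith [hu.2, ht'.1]]
      · simp only [min_eq_right h, max_eq_left h] at hu
        constructor <;> [linarith [hu.1, lt_min hr1 hr2]; linarith [hu.2, ht'.2]]
    have hnoJ : ∀ u ∈ Set.Icc (min t t') (max t t'), u ∉ (J : Set ℝ) := by
      intro u hu
      have h1 : u ∈ Metric.ball t r1 :=
        Metric.ball_subset_ball (min_le_left r1 r2) (hsub hu)
      exact hball1 h1
    rcases le_total t t' with h | h
    · have := hm'const t ht01 t' ht'01 h (by
        simpa [min_eq_left h, max_eq_right h] using hnoJ)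
      rw [← this]; exact htm
    · have := hm'const t' ht'01 t ht01 h (by
        simpa [min_eq_right h, max_eq_left h] using hnoJ)
      rw [this]; exact htm
  -- measurable substitute g
  set g : ℝ → ℝ := fun t => if t ∈ U then 1 else -1 with hg
  have hgval : ∀ t ∈ Set.Ioo (0:ℝ) 1, t ∉ (J : Set ℝ) → g t = m' t := by
    intro t ht htJ
    rcases hm'val t ht with h | h
    · show (if t ∈ U then (1:ℝ) else -1) = m' t
      rw [if_pos ⟨ht, htJ, h⟩, h]
    · show (if t ∈ U then (1:ℝ) else -1) = m' t
      rw [if_neg, h]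
      rintro ⟨_, _, h1⟩
      rw [h1] at h; norm_num at h
  have hgmeas : Measurable g :=
    Measurable.ite hUopen.measurableSet measurable_const measurable_const
  -- measurability of m
  have hNmono : Monotone (fun t : ℝ => ((Finset.Icc 1 n).filter (fun j => s j ≤ t)).card) := by
    intro t t' htt'
    apply Finset.card_le_card
    intro j hj
    rw [Finset.mem_filter] at hj ⊢
    exact ⟨hj.1, le_trans hj.2 htt'⟩
  have hmmeas : Measurable m := by
    have h1 : Measurable fun t : ℝ =>
        ((Finset.Icc 1 n).filter (fun j => s j ≤ t)).card := hNmono.measurable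
    have h2 : Measurable ((fun j : ℕ => ε * (-1:ℝ) ^ j) ∘
        (fun t : ℝ => ((Finset.Icc 1 n).filter (fun j => s j ≤ t)).card)) :=
      Measurable.comp measurable_from_top h1
    have h3 : m = fun t => ε * (-1:ℝ) ^
        (((Finset.Icc 1 n).filter (fun j => s j ≤ t)).card) := funext hm
    rw [h3]; exact h2
  have hFmeas : Measurable fun t => |m t - g t| ^ p :=
    (Real.continuous_rpow_const hp0).measurable.comp ((hmmeas.sub hgmeas).abs)
  -- bounds
  have hmabs : ∀ t, |m t| = 1 := by
    intro t
    rw [hm t, abs_mul, abs_pow, abs_neg, abs_one, one_pow, mul_one]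
    rcases hε with h | h <;> rw [h] <;> norm_num
  have hgabs : ∀ t, |g t| = 1 := by
    intro t
    show |if t ∈ U then (1:ℝ) else -1| = 1
    by_cases h : t ∈ U <;> simp [h]
  have hFbound : ∀ t, |m t - g t| ≤ 2 := by
    intro t
    have h1 := abs_le.mp (le_of_eq (hmabs t))
    have h2 := abs_le.mp (le_of_eq (hgabs t))
    rw [abs_le]; constructor <;> linarith [h1.1, h1.2, h2.1, h2.2]
  -- integrability of F on (0,1)
  have hFint : IntegrableOn (fun t => |m t - g t| ^ p) (Set.Ioc (0:ℝ) 1) := by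
    apply Measure.integrableOn_of_bounded (M := (2:ℝ) ^ p)
    · rw [Real.volume_Ioc]; exact ENNReal.ofReal_ne_top
    · exact hFmeas.aestronglyMeasurable
    · filter_upwards with t
      rw [Real.norm_eq_abs, abs_of_nonneg (Real.rpow_nonneg (abs_nonneg _) p)]
      exact Real.rpow_le_rpow (abs_nonneg _) (hFbound t) hp0
  have hFii : IntervalIntegrable (fun t => |m t - g t| ^ p) volume 0 1 := by
    rw [intervalIntegrable_iff_integrableOn_Ioc_of_le zero_le_one]
    exact hFint
  -- the integrands agree a.e. on (0,1]
  have hnull : (volume : Measure ℝ) ((J : Set ℝ) ∪ {1}) = 0 :=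
    measure_union_null (J.finite_toSet.measure_zero _) (measure_singleton 1)
  have h0 : ∀ᵐ t ∂(volume : Measure ℝ), t ∉ (J : Set ℝ) ∪ {1} :=
    measure_eq_zero_iff_ae_notMem.mp hnull
  have heq : (∫ t in (0:ℝ)..1, |m t - m' t| ^ p)
      = ∫ t in (0:ℝ)..1, |m t - g t| ^ p := by
    apply intervalIntegral.integral_congr_ae
    rw [Set.uIoc_of_le (zero_le_one : (0:ℝ) ≤ 1)]
    filter_upwards [h0] with t ht htI
    rw [Set.mem_union, Set.mem_singleton_iff] at ht
    push_neg at ht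
    have htIoo : t ∈ Set.Ioo (0:ℝ) 1 := ⟨htI.1, lt_of_le_of_ne htI.2 ht.2⟩
    rw [hgval t htIoo ht.1]
  -- interval integrability of the original integrand
  have hii : IntervalIntegrable (fun t => |m t - m' t| ^ p) volume 0 1 := by
    rw [intervalIntegrable_iff_integrableOn_Ioc_of_le zero_le_one]
    apply hFint.congr
    filter_upwards [ae_restrict_of_ae h0, ae_restrict_mem measurableSet_Ioc] with t ht htI
    rw [Set.mem_union, Set.mem_singleton_iff] at ht
    push_neg at ht
    have htIoo : t ∈ Set.Ioo (0:ℝ) 1 := ⟨htI.1, lt_of_le_of_ne htI.2 ht.2⟩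
    rw [hgval t htIoo ht.1]
  -- the half interval where |m - m'| = 2
  obtain ⟨a, b, hab0, habl, hab1, hlen, habs⟩ :
      ∃ a b : ℝ, 0 ≤ a ∧ a < b ∧ b ≤ 1 ∧ b - a = δ/2 ∧
        ∀ t ∈ Set.Ioo a b, |m t - m' t| = 2 := by
    have hcv : c = v ∨ c = -v := by
      rcases hcval with h | h <;> rcases hvsq with h' | h' <;> rw [h, h'] <;> norm_num
    rcases hcv with h | h
    · refine ⟨s k - δ/2, s k, by linarith, by linarith, by linarith, by ring, ?_⟩
      intro t ht
      have htI : t ∈ Set.Ioo (s k - δ/2) (s k + δ/2) := by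
        rw [Set.mem_Ioo] at ht ⊢
        exact ⟨ht.1, by linarith [ht.2]⟩
      rw [hm_left t ht, hm'c t htI, h]
      rcases hvsq with h' | h' <;> rw [h'] <;> norm_num
    · refine ⟨s k, s k + δ/2, by linarith, by linarith, by linarith, by ring, ?_⟩
      intro t ht
      rw [Set.mem_Ioo] at ht
      have htI : t ∈ Set.Ioo (s k - δ/2) (s k + δ/2) := by
        rw [Set.mem_Ioo]
        exact ⟨by linarith [ht.1], ht.2⟩
      rw [hm_right t ⟨le_of_lt ht.1, ht.2⟩, hm'c t htI, h]
      rcases hvsq with h' | h' <;> rw [h'] <;> norm_num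
  -- integral over the half interval
  have hnullb : (volume : Measure ℝ) ((J : Set ℝ) ∪ {b}) = 0 :=
    measure_union_null (J.finite_toSet.measure_zero _) (measure_singleton b)
  have h0b : ∀ᵐ t ∂(volume : Measure ℝ), t ∉ (J : Set ℝ) ∪ {b} :=
    measure_eq_zero_iff_ae_notMem.mp hnullb
  have hstep : (∫ t in a..b, |m t - g t| ^ p) = (b - a) * 2 ^ p := by
    have hcongr : (∫ t in a..b, |m t - g t| ^ p) = ∫ t in a..b, (2:ℝ) ^ p := by
      apply intervalIntegral.integral_congr_ae
      rw [Set.uIoc_of_le habl.le]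
      filter_upwards [h0b] with t ht htI
      rw [Set.mem_union, Set.mem_singleton_iff] at ht
      push_neg at ht
      have htIoo : t ∈ Set.Ioo a b := ⟨htI.1, lt_of_le_of_ne htI.2 ht.2⟩
      have ht01 : t ∈ Set.Ioo (0:ℝ) 1 :=
        ⟨lt_of_le_of_lt hab0 htIoo.1, lt_of_lt_of_le htIoo.2 hab1⟩
      rw [hgval t ht01 ht.1, habs t htIoo]
    rw [hcongr, intervalIntegral.integral_const, smul_eq_mul]
  have hmono' : (∫ t in a..b, |m t - g t| ^ p)
      ≤ ∫ t in (0:ℝ)..1, |m t - g t| ^ p := by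
    apply intervalIntegral.integral_mono_interval hab0 habl.le hab1
    · filter_upwards with t
      exact Real.rpow_nonneg (abs_nonneg _) p
    · exact hFii
  rw [heq]
  have hfin : (b - a) * 2 ^ p = 2 ^ p * δ / 2 := by rw [hlen]; ring
  calc 2 ^ p * δ / 2 = (b - a) * 2 ^ p := hfin.symm
    _ = ∫ t in a..b, |m t - g t| ^ p := hstep.symm
    _ ≤ ∫ t in (0:ℝ)..1, |m t - g t| ^ p := hmono'
end
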